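/- Let n ≥ 1 be an integer, s, q ∈ (0,1), Ω ⊂ ℝⁿ a bounded open set, c ≥ 0, and let g₁, g₂ : Ω → ℝ be measurable with g₁ ≤ g₂ almost everywhere in Ω. Let z₁, z₂ : ℝⁿ → ℝ be measurable functions such that z_i > 0 a.e. in Ω, z_i = 0 on ℝⁿ∖Ω, [z_i]_s² < ∞ for i = 1,2, and such that, with the test function φ = (z₁ − z₂)⁺, all the integrals below converge absolutely and E_s(z_i, φ) − c ∫_Ω z_i^{−q} φ dx = ∫_Ω g_i φ dx holds for i = 1,2. Then z₁ ≤ z₂ almost everywhere on ℝⁿ. -/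
import Mathlib


open Real Set MeasureTheory

lemma max_sub_max_sq_le (a b : ℝ) :
    (max a 0 - max b 0) ^ 2 ≤ (a - b) * (max a 0 - max b 0) := by
  rcases le_total a 0 with ha | ha <;> rcases le_total b 0 with hb | hb <;>
    simp [max_eq_left, max_eq_right, *] <;> nlinarith

/-- Weak comparison principle for the singular problem
`(−Δ)^s z − c z^{−q} = g` in its weak Gagliardo formulation: if `g₁ ≤ g₂`
a.e. in `Ω` and `z₁, z₂` are corresponding weak solutions (positive in `Ω`,
zero outside, finite Gagliardo seminorm), tested with `φ = (z₁ − z₂)⁺`, then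
`z₁ ≤ z₂` a.e. on `ℝⁿ`. -/
theorem weak_comparison_principle_singular
    (n : ℕ) (hn : 1 ≤ n) (s q : ℝ)
    (hs : s ∈ Set.Ioo (0 : ℝ) 1) (hq : q ∈ Set.Ioo (0 : ℝ) 1)
    (Ω : Set (EuclideanSpace ℝ (Fin n))) (hΩo : IsOpen Ω)
    (hΩb : Bornology.IsBounded Ω)
    (c : ℝ) (hc : 0 ≤ c)
    (g₁ g₂ : EuclideanSpace ℝ (Fin n) → ℝ)
    (hg : ∀ᵐ x ∂(volume.restrict Ω), g₁ x ≤ g₂ x)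
    (z₁ z₂ : EuclideanSpace ℝ (Fin n) → ℝ)
    (hz₁meas : Measurable z₁) (hz₂meas : Measurable z₂)
    (hz₁pos : ∀ᵐ x ∂(volume.restrict Ω), 0 < z₁ x)
    (hz₂pos : ∀ᵐ x ∂(volume.restrict Ω), 0 < z₂ x)
    (hz₁zero : ∀ x ∉ Ω, z₁ x = 0) (hz₂zero : ∀ x ∉ Ω, z₂ x = 0)
    (hz₁fin : MeasureTheory.Integrable
      (fun p : EuclideanSpace ℝ (Fin n) × EuclideanSpace ℝ (Fin n) =>
        (z₁ p.1 - z₁ p.2) ^ 2 / ‖p.1 - p.2‖ ^ ((n : ℝ) + 2 * s)) volume)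
    (hz₂fin : MeasureTheory.Integrable
      (fun p : EuclideanSpace ℝ (Fin n) × EuclideanSpace ℝ (Fin n) =>
        (z₂ p.1 - z₂ p.2) ^ 2 / ‖p.1 - p.2‖ ^ ((n : ℝ) + 2 * s)) volume)
    (φ : EuclideanSpace ℝ (Fin n) → ℝ)
    (hφ : φ = fun x => max (z₁ x - z₂ x) 0)
    (hint₁ : MeasureTheory.Integrable
      (fun p : EuclideanSpace ℝ (Fin n) × EuclideanSpace ℝ (Fin n) =>
        (z₁ p.1 - z₁ p.2) * (φ p.1 - φ p.2) / ‖p.1 - p.2‖ ^ ((n : ℝ) + 2 * s)) volume)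
    (hint₂ : MeasureTheory.Integrable
      (fun p : EuclideanSpace ℝ (Fin n) × EuclideanSpace ℝ (Fin n) =>
        (z₂ p.1 - z₂ p.2) * (φ p.1 - φ p.2) / ‖p.1 - p.2‖ ^ ((n : ℝ) + 2 * s)) volume)
    (hsing₁ : MeasureTheory.IntegrableOn (fun x => z₁ x ^ (-q) * φ x) Ω volume)
    (hsing₂ : MeasureTheory.IntegrableOn (fun x => z₂ x ^ (-q) * φ x) Ω volume)
    (hrhs₁ : MeasureTheory.IntegrableOn (fun x => g₁ x * φ x) Ω volume)
    (hrhs₂ : MeasureTheory.IntegrableOn (fun x => g₂ x * φ x) Ω volume)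
    (heq₁ : (∫ p : EuclideanSpace ℝ (Fin n) × EuclideanSpace ℝ (Fin n),
        (z₁ p.1 - z₁ p.2) * (φ p.1 - φ p.2) / ‖p.1 - p.2‖ ^ ((n : ℝ) + 2 * s)) -
      c * (∫ x in Ω, z₁ x ^ (-q) * φ x ∂volume) = ∫ x in Ω, g₁ x * φ x ∂volume)
    (heq₂ : (∫ p : EuclideanSpace ℝ (Fin n) × EuclideanSpace ℝ (Fin n),
        (z₂ p.1 - z₂ p.2) * (φ p.1 - φ p.2) / ‖p.1 - p.2‖ ^ ((n : ℝ) + 2 * s)) -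
      c * (∫ x in Ω, z₂ x ^ (-q) * φ x ∂volume) = ∫ x in Ω, g₂ x * φ x ∂volume) :
    ∀ᵐ x ∂(volume : Measure (EuclideanSpace ℝ (Fin n))), z₁ x ≤ z₂ x := by
  haveI : Nonempty (Fin n) := ⟨⟨0, hn⟩⟩
  set α : ℝ := (n : ℝ) + 2 * s with hα
  have hα0 : 0 ≤ α := by
    have := hs.1
    have : (0:ℝ) < n := by exact_mod_cast Nat.lt_of_lt_of_le Nat.zero_lt_one hn
    nlinarith [hs.1]
  -- φ properties
  have hφmeas : Measurable φ := by
    rw [hφ]; exact (hz₁meas.sub hz₂meas).max measurable_const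
  have hφnonneg : ∀ x, 0 ≤ φ x := by intro x; rw [hφ]; exact le_max_right _ _
  have hφzero : ∀ x ∉ Ω, φ x = 0 := by
    intro x hx; rw [hφ]; simp [hz₁zero x hx, hz₂zero x hx]
  -- the two quadratic-form integrands
  set I₁ : EuclideanSpace ℝ (Fin n) × EuclideanSpace ℝ (Fin n) → ℝ := fun p =>
    (z₁ p.1 - z₁ p.2) * (φ p.1 - φ p.2) / ‖p.1 - p.2‖ ^ α with hI₁
  set I₂ : EuclideanSpace ℝ (Fin n) × EuclideanSpace ℝ (Fin n) → ℝ := fun p =>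
    (z₂ p.1 - z₂ p.2) * (φ p.1 - φ p.2) / ‖p.1 - p.2‖ ^ α with hI₂
  set F : EuclideanSpace ℝ (Fin n) × EuclideanSpace ℝ (Fin n) → ℝ := fun p => (φ p.1 - φ p.2) ^ 2 / ‖p.1 - p.2‖ ^ α with hF
  set G : EuclideanSpace ℝ (Fin n) × EuclideanSpace ℝ (Fin n) → ℝ := fun p => I₁ p - I₂ p with hG
  have hFnonneg : ∀ p, 0 ≤ F p := fun p =>
    div_nonneg (sq_nonneg _) (Real.rpow_nonneg (norm_nonneg _) _)
  have hFG : ∀ p, F p ≤ G p := by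
    intro p
    have key : (φ p.1 - φ p.2) ^ 2 ≤
        ((z₁ p.1 - z₂ p.1) - (z₁ p.2 - z₂ p.2)) * (φ p.1 - φ p.2) := by
      rw [hφ]; exact max_sub_max_sq_le _ _
    have hKnn : (0:ℝ) ≤ ‖p.1 - p.2‖ ^ α := Real.rpow_nonneg (norm_nonneg _) _
    calc F p ≤ ((z₁ p.1 - z₂ p.1) - (z₁ p.2 - z₂ p.2)) * (φ p.1 - φ p.2) /
        ‖p.1 - p.2‖ ^ α := div_le_div_of_nonneg_right key hKnn
      _ = G p := by simp only [hG, hI₁, hI₂]; ring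
  have hFmeas : Measurable F := by
    have hden : Measurable fun p : EuclideanSpace ℝ (Fin n) × EuclideanSpace ℝ (Fin n) => ‖p.1 - p.2‖ ^ α :=
      (Continuous.rpow_const ((continuous_fst.sub continuous_snd).norm)
        (fun _ => Or.inr hα0)).measurable
    exact (((hφmeas.comp measurable_fst).sub (hφmeas.comp measurable_snd)).pow_const 2).div hden
  have hGint : Integrable G volume := hint₁.sub hint₂
  have hFint : Integrable F volume := by
    refine hGint.mono hFmeas.aestronglyMeasurable (Filter.Eventually.of_forall fun p => ?_)
    rw [Real.norm_eq_abs, Real.norm_eq_abs, abs_of_nonneg (hFnonneg p)]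
    exact (hFG p).trans (le_abs_self _)
  -- integral inequalities on the RHS
  have hsing_le : (∫ x in Ω, z₁ x ^ (-q) * φ x ∂volume) ≤
      ∫ x in Ω, z₂ x ^ (-q) * φ x ∂volume := by
    refine integral_mono_ae hsing₁ hsing₂ ?_
    filter_upwards [hz₁pos, hz₂pos] with x h1 h2
    rcases (hφnonneg x).lt_or_eq with hφx | hφx
    · have hw : z₂ x < z₁ x := by
        by_contra hcon
        push_neg at hcon
        have : φ x = 0 := by rw [hφ]; exact max_eq_right (sub_nonpos.mpr hcon)
        rw [this] at hφx; exact lt_irrefl _ hφx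
      have : z₁ x ^ (-q) ≤ z₂ x ^ (-q) :=
        Real.rpow_le_rpow_of_nonpos h2 hw.le (neg_nonpos.mpr hq.1.le)
      exact mul_le_mul_of_nonneg_right this hφx.le
    · rw [← hφx]; simp
  have hg_le : (∫ x in Ω, g₁ x * φ x ∂volume) ≤ ∫ x in Ω, g₂ x * φ x ∂volume := by
    refine integral_mono_ae hrhs₁ hrhs₂ ?_
    filter_upwards [hg] with x hx
    exact mul_le_mul_of_nonneg_right hx (hφnonneg x)
  have hGle : (∫ p, G p) ≤ 0 := by
    rw [hG]
    rw [integral_sub hint₁ hint₂]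
    have e₁ : (∫ p, I₁ p) = (∫ x in Ω, g₁ x * φ x ∂volume) +
        c * ∫ x in Ω, z₁ x ^ (-q) * φ x ∂volume := by
      simp only [hI₁]; linarith [heq₁]
    have e₂ : (∫ p, I₂ p) = (∫ x in Ω, g₂ x * φ x ∂volume) +
        c * ∫ x in Ω, z₂ x ^ (-q) * φ x ∂volume := by
      simp only [hI₂]; linarith [heq₂]
    rw [e₁, e₂]
    have := mul_le_mul_of_nonneg_left hsing_le hc
    linarith
  have hFzero_int : (∫ p, F p) = 0 :=
    le_antisymm ((integral_mono hFint hGint hFG).trans hGle)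
      (integral_nonneg hFnonneg)
  have hFae : ∀ᵐ p : EuclideanSpace ℝ (Fin n) × EuclideanSpace ℝ (Fin n) ∂volume, F p = 0 := by
    have h := (integral_eq_zero_iff_of_nonneg hFnonneg hFint).mp hFzero_int
    filter_upwards [h] with p hp using hp
  haveI : Nontrivial (EuclideanSpace ℝ (Fin n)) := inferInstance
  rw [Measure.volume_eq_prod _ _] at hFae
  have hxy : ∀ᵐ x : EuclideanSpace ℝ (Fin n) ∂volume,
      ∀ᵐ y : EuclideanSpace ℝ (Fin n) ∂volume, F (x, y) = 0 := Measure.ae_ae_of_ae_prod hFae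
  obtain ⟨R, hR⟩ := hΩb.subset_closedBall 0
  set R' : ℝ := max R 0 with hR'
  set p₀ : EuclideanSpace ℝ (Fin n) :=
    EuclideanSpace.single (⟨0, hn⟩ : Fin n) (R' + 2) with hp₀def
  have hp₀ : ‖p₀‖ = R' + 2 := by
    rw [hp₀def, EuclideanSpace.norm_single, Real.norm_eq_abs, abs_of_nonneg]
    positivity
  have hBΩ : ∀ y ∈ Metric.ball p₀ 1, y ∉ Ω := by
    intro y hy hyΩ
    have h1 : ‖y‖ ≤ R' := le_trans (by simpa [Metric.mem_closedBall, dist_zero_right] using hR hyΩ)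
      (le_max_left _ _)
    have h2 : dist y p₀ < 1 := Metric.mem_ball.mp hy
    have h3 : ‖p₀‖ - ‖y‖ ≤ dist y p₀ := by
      rw [dist_eq_norm]
      calc ‖p₀‖ - ‖y‖ ≤ ‖p₀ - y‖ := by
            have := norm_sub_norm_le p₀ y
            linarith
        _ = ‖y - p₀‖ := norm_sub_rev _ _
    rw [hp₀] at h3
    linarith
  have hBpos : 0 < volume (Metric.ball p₀ 1) := Metric.measure_ball_pos _ _ one_pos
  filter_upwards [hxy] with x hx
  by_contra hcon
  push_neg at hcon
  have hφx : 0 < φ x := by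
    rw [hφ]
    exact lt_max_of_lt_left (sub_pos.mpr hcon)
  have hne : ∀ᵐ y : EuclideanSpace ℝ (Fin n) ∂volume, y ≠ x := by
    have h0 : volume ({x} : Set (EuclideanSpace ℝ (Fin n))) = 0 := measure_singleton x
    rw [ae_iff]
    convert h0 using 2
    ext y
    simp
  have hconst : ∀ᵐ y : EuclideanSpace ℝ (Fin n) ∂volume, φ y = φ x := by
    filter_upwards [hx, hne] with y hy hyx
    have hnorm : (0:ℝ) < ‖x - y‖ := by
      rw [norm_pos_iff, sub_ne_zero]
      exact fun h => hyx h.symm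
    have hKpos : (0:ℝ) < ‖x - y‖ ^ α := Real.rpow_pos_of_pos hnorm _
    have : (φ x - φ y) ^ 2 / ‖x - y‖ ^ α = 0 := hy
    have hnum : (φ x - φ y) ^ 2 = 0 := by
      rcases div_eq_zero_iff.mp this with h | h
      · exact h
      · exact absurd h hKpos.ne'
    have := pow_eq_zero_iff (n := 2) (by norm_num) |>.mp hnum
    linarith [sub_eq_zero.mp this]
  have hsub : Metric.ball p₀ 1 ⊆ {y | ¬ φ y = φ x} := by
    intro y hy
    have h0 : φ y = 0 := hφzero y (hBΩ y hy)
    simp only [Set.mem_setOf_eq, h0]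
    exact fun h => hφx.ne h
  have : volume (Metric.ball p₀ 1) = 0 :=
    measure_mono_null hsub (by rw [← ae_iff] at *; exact hconst)
  exact hBpos.ne' this
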